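/- Let X be a coalgebra and let 𝒳 = (X; ·, ⊥) be a left regular q-magma coalgebra. Define s : X⊗X → X⊗X by s(x⊗y) := ^{x_(2)}y_(2) ⊗ x_(1)^{y_(1)}, where x^y := (id⊗ε)(Ḡ^{-1}(x⊗y)) and ˣy := y_(2) ⊥ x^{y_(1)}. Then s is a left non-degenerate coalgebra endomorphism of X⊗X. -/

import Mathlib

open TensorProduct

noncomputable section

variable (k : Type) [Field k] (X : Type) [AddCommGroup X] [Module k X] [Coalgebra k X]

/-- x ⊗ y ↦ ε(y) x -/
def cE : X ⊗[k] X →ₗ[k] X :=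
  (TensorProduct.rid k X).toLinearMap ∘ₗ LinearMap.lTensor X (Coalgebra.counit (R := k))

/-- x ⊗ y ↦ ε(x) y -/
def cE' : X ⊗[k] X →ₗ[k] X :=
  (TensorProduct.lid k X).toLinearMap ∘ₗ LinearMap.rTensor X (Coalgebra.counit (R := k))

/-- first Sweedler component of a morphism `X⊗X → X⊗X` -/
def comp1 (s : X ⊗[k] X →ₗ[k] X ⊗[k] X) : X ⊗[k] X →ₗ[k] X := cE k X ∘ₗ s

/-- second Sweedler component of a morphism `X⊗X → X⊗X` -/
def comp2 (s : X ⊗[k] X →ₗ[k] X ⊗[k] X) : X ⊗[k] X →ₗ[k] X := cE' k X ∘ₗ s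

/-- `Gmap f (x ⊗ y) = f (x ⊗ y₍₁₎) ⊗ y₍₂₎` -/
def Gmap (f : X ⊗[k] X →ₗ[k] X) : X ⊗[k] X →ₗ[k] X ⊗[k] X :=
  TensorProduct.map f LinearMap.id ∘ₗ (TensorProduct.assoc k X X X).symm.toLinearMap ∘ₗ
    LinearMap.lTensor X (Coalgebra.comul (R := k))

/-- comultiplication of `X^cop` -/
def comulCop : X →ₗ[k] X ⊗[k] X :=
  (TensorProduct.comm k X X).toLinearMap ∘ₗ Coalgebra.comul (R := k)

/-- `GmapCop f (x ⊗ y) = f (x ⊗ y₍₂₎) ⊗ y₍₁₎` -/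
def GmapCop (f : X ⊗[k] X →ₗ[k] X) : X ⊗[k] X →ₗ[k] X ⊗[k] X :=
  TensorProduct.map f LinearMap.id ∘ₗ (TensorProduct.assoc k X X X).symm.toLinearMap ∘ₗ
    LinearMap.lTensor X (comulCop k X)

/-- comultiplication of `X ⊗ X` -/
def comulT : X ⊗[k] X →ₗ[k] (X ⊗[k] X) ⊗[k] (X ⊗[k] X) :=
  (TensorProduct.tensorTensorTensorComm k X X X X).toLinearMap ∘ₗ
    TensorProduct.map (Coalgebra.comul (R := k)) (Coalgebra.comul (R := k))

/-- comultiplication of `X ⊗ X^cop` -/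
def comulTCop : X ⊗[k] X →ₗ[k] (X ⊗[k] X) ⊗[k] (X ⊗[k] X) :=
  (TensorProduct.tensorTensorTensorComm k X X X X).toLinearMap ∘ₗ
    TensorProduct.map (Coalgebra.comul (R := k)) (comulCop k X)

/-- comultiplication of `X^cop ⊗ X^cop` -/
def comulTcc : X ⊗[k] X →ₗ[k] (X ⊗[k] X) ⊗[k] (X ⊗[k] X) :=
  (TensorProduct.tensorTensorTensorComm k X X X X).toLinearMap ∘ₗ
    TensorProduct.map (comulCop k X) (comulCop k X)

/-- counit of `X ⊗ X` -/
def counitT : X ⊗[k] X →ₗ[k] k :=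
  (TensorProduct.lid k k).toLinearMap ∘ₗ
    TensorProduct.map (Coalgebra.counit (R := k)) (Coalgebra.counit (R := k))

/-- `s : X⊗X → X⊗X` is a coalgebra morphism -/
def IsCoalgEndo (s : X ⊗[k] X →ₗ[k] X ⊗[k] X) : Prop :=
  comulT k X ∘ₗ s = TensorProduct.map s s ∘ₗ comulT k X ∧ counitT k X ∘ₗ s = counitT k X

/-- `f : X⊗X → X` is a coalgebra morphism -/
def IsCoalgMor (f : X ⊗[k] X →ₗ[k] X) : Prop :=
  Coalgebra.comul (R := k) ∘ₗ f = TensorProduct.map f f ∘ₗ comulT k X ∧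
  Coalgebra.counit (R := k) ∘ₗ f = counitT k X

/-- `f : X ⊗ X^cop → X` is a coalgebra morphism -/
def IsCoalgMorCop (f : X ⊗[k] X →ₗ[k] X) : Prop :=
  Coalgebra.comul (R := k) ∘ₗ f = TensorProduct.map f f ∘ₗ comulTCop k X ∧
  Coalgebra.counit (R := k) ∘ₗ f = counitT k X

/-- the operation `x ⊥ y := s₁ ((y·x₍₁₎) ⊗ x₍₂₎)` -/
def dOf (s : X ⊗[k] X →ₗ[k] X ⊗[k] X) (p : X ⊗[k] X →ₗ[k] X) : X ⊗[k] X →ₗ[k] X :=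
  comp1 k X s ∘ₗ Gmap k X p ∘ₗ (TensorProduct.comm k X X).toLinearMap

/-- the operation `⊥` of the endomorphism `s` viewed on `X^cop ⊗ X^cop` -/
def dOfCop (s : X ⊗[k] X →ₗ[k] X ⊗[k] X) (p : X ⊗[k] X →ₗ[k] X) : X ⊗[k] X →ₗ[k] X :=
  comp1 k X s ∘ₗ GmapCop k X p ∘ₗ (TensorProduct.comm k X X).toLinearMap

/-- left non-degeneracy of `s` : `G_s` is invertible -/
def LeftNonDeg (s : X ⊗[k] X →ₗ[k] X ⊗[k] X) : Prop :=
  Function.Bijective (Gmap k X (comp2 k X s))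

/-- `p` is the operation `·` associated with a left non-degenerate `s`, i.e.
`(x·y₍₁₎)^(y₍₂₎) = x^(y₍₁₎)·y₍₂₎ = ε(y)x`. -/
def IsDotOf (s : X ⊗[k] X →ₗ[k] X ⊗[k] X) (p : X ⊗[k] X →ₗ[k] X) : Prop :=
  comp2 k X s ∘ₗ Gmap k X p = cE k X ∧ p ∘ₗ Gmap k X (comp2 k X s) = cE k X

def s12m (s : X ⊗[k] X →ₗ[k] X ⊗[k] X) : (X ⊗[k] X) ⊗[k] X →ₗ[k] (X ⊗[k] X) ⊗[k] X :=
  LinearMap.rTensor X s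

def s23m (s : X ⊗[k] X →ₗ[k] X ⊗[k] X) : (X ⊗[k] X) ⊗[k] X →ₗ[k] (X ⊗[k] X) ⊗[k] X :=
  (TensorProduct.assoc k X X X).symm.toLinearMap ∘ₗ LinearMap.lTensor X s ∘ₗ
    (TensorProduct.assoc k X X X).toLinearMap

/-- the braid equation -/
def IsBraidSol (s : X ⊗[k] X →ₗ[k] X ⊗[k] X) : Prop :=
  s12m k X s ∘ₗ s23m k X s ∘ₗ s12m k X s = s23m k X s ∘ₗ s12m k X s ∘ₗ s23m k X s

/-- the exchange identity `y₍₁₎⊥x₍₂₎ ⊗ x₍₁₎·y₍₂₎ = y₍₂₎⊥x₍₁₎ ⊗ x₍₂₎·y₍₁₎` -/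
def ExchangeId (p d : X ⊗[k] X →ₗ[k] X) : Prop :=
  ∀ (x y : X) (n m : ℕ) (x1 x2 : Fin n → X) (y1 y2 : Fin m → X),
    (∑ i, x1 i ⊗ₜ[k] x2 i) = Coalgebra.comul (R := k) x →
    (∑ j, y1 j ⊗ₜ[k] y2 j) = Coalgebra.comul (R := k) y →
    (∑ i, ∑ j, d (y1 j ⊗ₜ[k] x2 i) ⊗ₜ[k] p (x1 i ⊗ₜ[k] y2 j)) =
      ∑ i, ∑ j, d (y2 j ⊗ₜ[k] x1 i) ⊗ₜ[k] p (x2 i ⊗ₜ[k] y1 j)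

/-- the three q-cycle coalgebra conditions -/
def QCycleConds (p d : X ⊗[k] X →ₗ[k] X) : Prop :=
  ∀ (x y z : X) (n m : ℕ) (y1 y2 : Fin n → X) (z1 z2 : Fin m → X),
    (∑ i, y1 i ⊗ₜ[k] y2 i) = Coalgebra.comul (R := k) y →
    (∑ j, z1 j ⊗ₜ[k] z2 j) = Coalgebra.comul (R := k) z →
    ((∑ i, p (p (x ⊗ₜ[k] y1 i) ⊗ₜ[k] d (z ⊗ₜ[k] y2 i))) =
        ∑ j, p (p (x ⊗ₜ[k] z2 j) ⊗ₜ[k] p (y ⊗ₜ[k] z1 j)) ∧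
     (∑ i, d (p (x ⊗ₜ[k] y1 i) ⊗ₜ[k] p (z ⊗ₜ[k] y2 i))) =
        ∑ j, p (d (x ⊗ₜ[k] z2 j) ⊗ₜ[k] d (y ⊗ₜ[k] z1 j)) ∧
     (∑ i, d (d (x ⊗ₜ[k] y1 i) ⊗ₜ[k] d (z ⊗ₜ[k] y2 i))) =
        ∑ j, d (d (x ⊗ₜ[k] z2 j) ⊗ₜ[k] p (y ⊗ₜ[k] z1 j)))


/-- the left action `ˣy := y₍₂₎ ⊥ x^(y₍₁₎)`, where `g` is the operation `x^y` -/
def bOf (g d : X ⊗[k] X →ₗ[k] X) : X ⊗[k] X →ₗ[k] X :=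
  d ∘ₗ (TensorProduct.comm k X X).toLinearMap ∘ₗ Gmap k X g

/-- the left action `_xy := y₍₁₎ · x_(y₍₂₎)`, where `g'` is the operation `x_y` -/
def uOfCop (g' p : X ⊗[k] X →ₗ[k] X) : X ⊗[k] X →ₗ[k] X :=
  p ∘ₗ (TensorProduct.comm k X X).toLinearMap ∘ₗ GmapCop k X g'

/-- `Hmap f (x ⊗ y) = f (y₍₂₎ ⊗ x) ⊗ y₍₁₎` -/
def Hmap (f : X ⊗[k] X →ₗ[k] X) : X ⊗[k] X →ₗ[k] X ⊗[k] X :=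
  TensorProduct.map f LinearMap.id ∘ₗ (TensorProduct.assoc k X X X).symm.toLinearMap ∘ₗ
    LinearMap.lTensor X (TensorProduct.comm k X X).toLinearMap ∘ₗ
    (TensorProduct.assoc k X X X).toLinearMap ∘ₗ
    LinearMap.rTensor X (comulCop k X) ∘ₗ (TensorProduct.comm k X X).toLinearMap

/-- `HmapCop f (x ⊗ y) = f (y₍₁₎ ⊗ x) ⊗ y₍₂₎` -/
def HmapCop (f : X ⊗[k] X →ₗ[k] X) : X ⊗[k] X →ₗ[k] X ⊗[k] X :=
  TensorProduct.map f LinearMap.id ∘ₗ (TensorProduct.assoc k X X X).symm.toLinearMap ∘ₗ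
    LinearMap.lTensor X (TensorProduct.comm k X X).toLinearMap ∘ₗ
    (TensorProduct.assoc k X X X).toLinearMap ∘ₗ
    LinearMap.rTensor X (Coalgebra.comul (R := k)) ∘ₗ (TensorProduct.comm k X X).toLinearMap

/-!
Write `Ḡ := Gmap p`. Since `x ↦ x^y` undoes `x ↦ x·y`, `Ḡ` is invertible with inverse
`Gmap g`, and `s (x·y₍₁₎ ⊗ y₍₂₎) = y ⊥ x₍₂₎ ⊗ x₍₁₎`. Hence it suffices to check
`Δ ∘ s = (s ⊗ s) ∘ Δ` after precomposing with `Ḡ`. The left side becomes `Δ (y ⊥ x₍₂₎ ⊗ x₍₁₎)`,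
which expands because `⊥` is a coalgebra morphism. On the right side the formula for `s ∘ Ḡ` is
applied to the first factor; the exchange identity then moves the second factor back into the
image of `Ḡ`, where the formula applies once more, and coassociativity matches the two sides.
Counitality is immediate, and `s₂(x ⊗ y) = x^y`, so `G_s = Gmap g` is invertible.
-/

open Coalgebra

section Sweedler

variable {k X} {ι κ μ ν : Type*}

theorem sum_counit_right_smul {a : X} (r : Repr k a ι) :
    ∑ i ∈ r.index, counit (R := k) (r.right i) • r.left i = a := by
  have h := congr(TensorProduct.rid k X $(sum_tmul_counit_eq r))
  simpa only [map_sum, TensorProduct.rid_tmul, one_smul] using h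

theorem sum_counit_mul_counit {a : X} (r : Repr k a ι) :
    ∑ i ∈ r.index, counit (R := k) (r.left i) * counit (R := k) (r.right i) =
      counit (R := k) a := by
  simpa [map_sum, smul_eq_mul] using congr(counit (R := k) $(sum_counit_smul r))

@[simp] theorem cE_tmul (x y : X) : cE k X (x ⊗ₜ y) = counit (R := k) y • x := by simp [cE]

@[simp] theorem cE'_tmul (x y : X) : cE' k X (x ⊗ₜ y) = counit (R := k) x • y := by simp [cE']

@[simp] theorem counitT_tmul (x y : X) :
    counitT k X (x ⊗ₜ y) = counit (R := k) x * counit (R := k) y := by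
  simp [counitT]

theorem Gmap_tmul (f : X ⊗[k] X →ₗ[k] X) (x : X) {y : X} (r : Repr k y ι) :
    Gmap k X f (x ⊗ₜ y) = ∑ i ∈ r.index, f (x ⊗ₜ r.left i) ⊗ₜ r.right i := by
  simp [Gmap, ← r.eq, tmul_sum, map_sum]

theorem GmapCop_tmul (f : X ⊗[k] X →ₗ[k] X) (x : X) {y : X} (r : Repr k y ι) :
    GmapCop k X f (x ⊗ₜ y) = ∑ i ∈ r.index, f (x ⊗ₜ r.right i) ⊗ₜ r.left i := by
  simp [GmapCop, comulCop, ← r.eq, tmul_sum, map_sum]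

theorem comulT_tmul {x y : X} (rx : Repr k x ι) (ry : Repr k y κ) :
    comulT k X (x ⊗ₜ y) =
      ∑ i ∈ rx.index, ∑ j ∈ ry.index, (rx.left i ⊗ₜ ry.left j) ⊗ₜ (rx.right i ⊗ₜ ry.right j) := by
  simp only [comulT, LinearMap.coe_comp, LinearEquiv.coe_coe, Function.comp_apply, map_tmul,
    ← rx.eq, ← ry.eq, tmul_sum, sum_tmul, map_sum, tensorTensorTensorComm_tmul]
  exact Finset.sum_comm

theorem comulTcc_tmul {x y : X} (rx : Repr k x ι) (ry : Repr k y κ) :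
    comulTcc k X (x ⊗ₜ y) =
      ∑ i ∈ rx.index, ∑ j ∈ ry.index, (rx.right i ⊗ₜ ry.right j) ⊗ₜ (rx.left i ⊗ₜ ry.left j) := by
  simp only [comulTcc, comulCop, LinearMap.coe_comp, LinearEquiv.coe_coe, Function.comp_apply,
    map_tmul, ← rx.eq, map_sum, comm_tmul, ← ry.eq, tmul_sum, sum_tmul,
    tensorTensorTensorComm_tmul]
  exact Finset.sum_comm

theorem IsCoalgMorCop.comul_apply {f : X ⊗[k] X →ₗ[k] X} (hf : IsCoalgMorCop k X f)
    {x y : X} (rx : Repr k x ι) (ry : Repr k y κ) :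
    comul (R := k) (f (x ⊗ₜ y)) =
      ∑ i ∈ rx.index, ∑ j ∈ ry.index,
        f (rx.left i ⊗ₜ ry.right j) ⊗ₜ f (rx.right i ⊗ₜ ry.left j) := by
  simp only [← LinearMap.comp_apply, hf.1, comulTCop, comulCop, LinearMap.coe_comp,
    LinearEquiv.coe_coe, Function.comp_apply, map_tmul, ← rx.eq, ← ry.eq, map_sum, comm_tmul,
    tmul_sum, sum_tmul, tensorTensorTensorComm_tmul]
  exact Finset.sum_comm

theorem sum_apply_coassoc {W : Type*} [AddCommGroup W] [Module k W]
    (M : X ⊗[k] (X ⊗[k] X) →ₗ[k] W) {y : X} (r : Repr k y ι)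
    (a₁ : ∀ i, Repr k (r.left i) κ) (a₂ : ∀ i, Repr k (r.right i) μ) :
    ∑ i ∈ r.index, ∑ j ∈ (a₁ i).index, M ((a₁ i).left j ⊗ₜ ((a₁ i).right j ⊗ₜ r.right i)) =
      ∑ i ∈ r.index, ∑ j ∈ (a₂ i).index, M (r.left i ⊗ₜ ((a₂ i).left j ⊗ₜ (a₂ i).right j)) := by
  simpa [map_sum] using congr(M $(sum_tmul_tmul_eq r a₁ a₂))

theorem sum_apply_coassoc₄ {W : Type*} [AddCommGroup W] [Module k W]
    (M : X ⊗[k] (X ⊗[k] (X ⊗[k] X)) →ₗ[k] W) {y : X} (r : Repr k y ι)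
    (a₁ : ∀ i, Repr k (r.left i) κ) (a₂ : ∀ i, Repr k (r.right i) μ)
    (a₃ : ∀ i l, Repr k ((a₂ i).left l) ν) :
    ∑ i ∈ r.index, ∑ j ∈ (a₁ i).index, ∑ l ∈ (a₂ i).index,
      M ((a₁ i).left j ⊗ₜ ((a₁ i).right j ⊗ₜ ((a₂ i).left l ⊗ₜ (a₂ i).right l))) =
    ∑ i ∈ r.index, ∑ l ∈ (a₂ i).index, ∑ m ∈ (a₃ i l).index,
      M (r.left i ⊗ₜ ((a₃ i l).left m ⊗ₜ ((a₃ i l).right m ⊗ₜ (a₂ i).right l))) := by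
  have outer := sum_apply_coassoc (M ∘ₗ LinearMap.lTensor X (LinearMap.lTensor X comul)) r a₁ a₂
  simp only [LinearMap.comp_apply, LinearMap.lTensor_tmul, ← (a₂ _).eq, tmul_sum, map_sum]
    at outer
  rw [outer]
  refine Finset.sum_congr rfl fun i _ => ?_
  have inner := sum_apply_coassoc (M ∘ₗ TensorProduct.mk k X _ (r.left i)) (a₂ i) (a₃ i)
    fun l => ℛ k ((a₂ i).right l)
  simp only [LinearMap.comp_apply, TensorProduct.mk_apply] at inner
  simp only [inner, ← (ℛ k _).eq, tmul_sum, map_sum]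

end Sweedler

section GmapAlgebra

variable {k X}

theorem Gmap_cE : Gmap k X (cE k X) = LinearMap.id := by
  refine TensorProduct.ext' fun x y => ?_
  rw [Gmap_tmul _ x (ℛ k y)]
  simp only [cE_tmul, smul_tmul]
  rw [← tmul_sum, sum_counit_smul]
  rfl

theorem Gmap_comp (f f' : X ⊗[k] X →ₗ[k] X) :
    Gmap k X f ∘ₗ Gmap k X f' = Gmap k X (f ∘ₗ Gmap k X f') := by
  refine TensorProduct.ext' fun x y => ?_
  have h := sum_apply_coassoc (TensorProduct.map f LinearMap.id ∘ₗ
      LinearMap.rTensor X (LinearMap.rTensor X (f' ∘ₗ TensorProduct.mk k X X x)) ∘ₗ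
      (TensorProduct.assoc k X X X).symm.toLinearMap)
    (ℛ k y) (fun i => ℛ k ((ℛ k y).left i)) (fun i => ℛ k ((ℛ k y).right i))
  simp only [LinearMap.comp_apply, LinearEquiv.coe_coe, TensorProduct.assoc_symm_tmul,
    LinearMap.rTensor_tmul, TensorProduct.mk_apply, TensorProduct.map_tmul, LinearMap.id_apply] at h
  simp only [LinearMap.comp_apply, Gmap_tmul _ x (ℛ k y), map_sum,
    Gmap_tmul _ _ (ℛ k ((ℛ k y).right _)), Gmap_tmul _ _ (ℛ k ((ℛ k y).left _)), sum_tmul, h]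

theorem Gmap_comp_Gmap_eq_id {f f' : X ⊗[k] X →ₗ[k] X} (h : f ∘ₗ Gmap k X f' = cE k X) :
    Gmap k X f ∘ₗ Gmap k X f' = LinearMap.id := by
  rw [Gmap_comp, h, Gmap_cE]

theorem counitT_comp_Gmap (f : X ⊗[k] X →ₗ[k] X) :
    counitT k X ∘ₗ Gmap k X f = counit ∘ₗ f := by
  refine TensorProduct.ext' fun x y => ?_
  simp only [LinearMap.comp_apply, Gmap_tmul _ x (ℛ k y), map_sum, counitT_tmul]
  conv_rhs => rw [← sum_counit_right_smul (ℛ k y)]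
  simp [tmul_sum, map_sum, mul_comm]

theorem counit_comp_cE : counit ∘ₗ cE k X = counitT k X := by
  refine TensorProduct.ext' fun x y => ?_
  simp [mul_comm]

theorem counitT_comp_comm :
    counitT k X ∘ₗ (TensorProduct.comm k X X).toLinearMap = counitT k X := by
  refine TensorProduct.ext' fun x y => ?_
  simp [mul_comm]

theorem counit_comp_eq_counitT_of_comp_Gmap_eq_cE {p g : X ⊗[k] X →ₗ[k] X}
    (hp : counit ∘ₗ p = counitT k X) (hg : p ∘ₗ Gmap k X g = cE k X) :
    counit ∘ₗ g = counitT k X := by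
  calc counit ∘ₗ g = counitT k X ∘ₗ Gmap k X g := (counitT_comp_Gmap g).symm
    _ = (counit ∘ₗ p) ∘ₗ Gmap k X g := by rw [hp]
    _ = counitT k X := by rw [LinearMap.comp_assoc, hg, counit_comp_cE]

theorem counit_comp_bOf {g d : X ⊗[k] X →ₗ[k] X} (hg : counit ∘ₗ g = counitT k X)
    (hd : counit ∘ₗ d = counitT k X) : counit ∘ₗ bOf k X g d = counitT k X := by
  rw [bOf, ← LinearMap.comp_assoc, hd, ← LinearMap.comp_assoc, counitT_comp_comm,
    counitT_comp_Gmap, hg]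

theorem bOf_comp_Gmap {p g : X ⊗[k] X →ₗ[k] X} (d : X ⊗[k] X →ₗ[k] X)
    (hg : g ∘ₗ Gmap k X p = cE k X) :
    bOf k X g d ∘ₗ Gmap k X p = d ∘ₗ (TensorProduct.comm k X X).toLinearMap := by
  rw [bOf, LinearMap.comp_assoc, LinearMap.comp_assoc, Gmap_comp_Gmap_eq_id hg,
    LinearMap.comp_id]

theorem Gmap_bijective {f f' : X ⊗[k] X →ₗ[k] X} (h : f ∘ₗ Gmap k X f' = cE k X)
    (h' : f' ∘ₗ Gmap k X f = cE k X) : Function.Bijective (Gmap k X f) :=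
  Function.bijective_iff_has_inverse.mpr ⟨Gmap k X f',
    LinearMap.congr_fun (Gmap_comp_Gmap_eq_id h'), LinearMap.congr_fun (Gmap_comp_Gmap_eq_id h)⟩

end GmapAlgebra

section Solution

variable {k X} {ι κ μ ν : Type*}

def sOf (g d : X ⊗[k] X →ₗ[k] X) : X ⊗[k] X →ₗ[k] X ⊗[k] X :=
  TensorProduct.map (bOf k X g d) g ∘ₗ comulTcc k X

theorem sOf_tmul (g d : X ⊗[k] X →ₗ[k] X) {x y : X} (rx : Repr k x ι) (ry : Repr k y κ) :
    sOf g d (x ⊗ₜ y) = ∑ i ∈ rx.index, ∑ j ∈ ry.index,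
      bOf k X g d (rx.right i ⊗ₜ ry.right j) ⊗ₜ g (rx.left i ⊗ₜ ry.left j) := by
  simp [sOf, comulTcc_tmul rx ry, map_sum]

theorem counitT_comp_sOf {g d : X ⊗[k] X →ₗ[k] X} (hg : counit ∘ₗ g = counitT k X)
    (hb : counit ∘ₗ bOf k X g d = counitT k X) : counitT k X ∘ₗ sOf g d = counitT k X := by
  refine TensorProduct.ext' fun x y => ?_
  have hg' := LinearMap.congr_fun hg
  have hb' := LinearMap.congr_fun hb
  simp only [LinearMap.comp_apply] at hg' hb'
  simp only [LinearMap.comp_apply, sOf_tmul _ _ (ℛ k x) (ℛ k y), map_sum, counitT_tmul, hg', hb']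
  rw [← sum_counit_mul_counit (ℛ k x), ← sum_counit_mul_counit (ℛ k y), Finset.sum_mul_sum]
  exact Finset.sum_congr rfl fun i _ => Finset.sum_congr rfl fun j _ => by ring

theorem comp2_sOf {g d : X ⊗[k] X →ₗ[k] X} (hb : counit ∘ₗ bOf k X g d = counitT k X) :
    comp2 k X (sOf g d) = g := by
  refine TensorProduct.ext' fun x y => ?_
  have hb' := LinearMap.congr_fun hb
  simp only [LinearMap.comp_apply] at hb'
  conv_rhs => rw [← sum_counit_right_smul (ℛ k x), ← sum_counit_right_smul (ℛ k y)]
  simp only [comp2, LinearMap.comp_apply, sOf_tmul _ _ (ℛ k x) (ℛ k y), map_sum, cE'_tmul, hb',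
    counitT_tmul, sum_tmul, tmul_sum, smul_tmul_smul, map_smul]
  exact Finset.sum_comm

def IsCoalgMorCop.repr {f : X ⊗[k] X →ₗ[k] X} (hf : IsCoalgMorCop k X f) {x y : X}
    (rx : Repr k x ι) (ry : Repr k y κ) : Repr k (f (x ⊗ₜ y)) (ι × κ) where
  index := rx.index ×ˢ ry.index
  left z := f (rx.left z.1 ⊗ₜ ry.right z.2)
  right z := f (rx.right z.1 ⊗ₜ ry.left z.2)
  eq := by rw [Finset.sum_product, hf.comul_apply rx ry]

/-- `(B ⊗ G) (Δ (x·y₍₁₎ ⊗ y₍₂₎)) = B (x₍₂₎·y₍₁₎ ⊗ y₍₃₎) ⊗ G (Ḡ (x₍₁₎ ⊗ y₍₂₎))`, with `Δ` the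
comultiplication of `X^cop ⊗ X^cop`. -/
theorem map_comulTcc_Gmap_tmul {V W : Type*} [AddCommGroup V] [Module k V] [AddCommGroup W]
    [Module k W] (B : X ⊗[k] X →ₗ[k] V) (G : X ⊗[k] X →ₗ[k] W) {p : X ⊗[k] X →ₗ[k] X}
    (hp : IsCoalgMorCop k X p) {x y : X} (rx : Repr k x ι) (ry : Repr k y κ)
    (r : ∀ j, Repr k (ry.right j) ν) :
    TensorProduct.map B G (comulTcc k X (Gmap k X p (x ⊗ₜ y))) =
      ∑ i ∈ rx.index, ∑ j ∈ ry.index, ∑ l ∈ (r j).index,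
        B (p (rx.right i ⊗ₜ ry.left j) ⊗ₜ (r j).right l) ⊗ₜ
          G (Gmap k X p (rx.left i ⊗ₜ (r j).left l)) := by
  have h := fun i => sum_apply_coassoc₄ (TensorProduct.map B G ∘ₗ
      TensorProduct.map (LinearMap.rTensor X (p ∘ₗ TensorProduct.mk k X X (rx.right i)))
        (LinearMap.rTensor X (p ∘ₗ TensorProduct.mk k X X (rx.left i))) ∘ₗ
      (TensorProduct.tensorTensorTensorComm k X X X X).toLinearMap ∘ₗ
      LinearMap.lTensor _ (TensorProduct.comm k X X).toLinearMap ∘ₗ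
      (TensorProduct.assoc k X X _).symm.toLinearMap)
    ry (fun j => ℛ k (ry.left j)) r (fun j l => ℛ k ((r j).left l))
  simp only [LinearMap.comp_apply, LinearEquiv.coe_coe, TensorProduct.assoc_symm_tmul,
    LinearMap.lTensor_tmul, TensorProduct.comm_tmul, TensorProduct.tensorTensorTensorComm_tmul,
    TensorProduct.map_tmul, LinearMap.rTensor_tmul, TensorProduct.mk_apply] at h
  rw [Gmap_tmul p x ry, map_sum, map_sum]
  simp only [comulTcc_tmul (hp.repr rx (ℛ k (ry.left _))) (r _), IsCoalgMorCop.repr,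
    Finset.sum_product, map_sum, TensorProduct.map_tmul]
  rw [Finset.sum_comm]
  refine Finset.sum_congr rfl fun i _ => ?_
  rw [h i]
  simp only [Gmap_tmul p _ (ℛ k ((r _).left _)), map_sum, tmul_sum]

theorem sOf_comp_Gmap {p g : X ⊗[k] X →ₗ[k] X} (d : X ⊗[k] X →ₗ[k] X) (hp : IsCoalgMorCop k X p)
    (hg : g ∘ₗ Gmap k X p = cE k X) :
    sOf g d ∘ₗ Gmap k X p = GmapCop k X d ∘ₗ (TensorProduct.comm k X X).toLinearMap := by
  refine TensorProduct.ext' fun x y => ?_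
  have hg' := LinearMap.congr_fun hg
  have hb (a b : X) : bOf k X g d (Gmap k X p (a ⊗ₜ b)) = d (b ⊗ₜ a) :=
    LinearMap.congr_fun (bOf_comp_Gmap d hg) (a ⊗ₜ b)
  simp only [LinearMap.comp_apply] at hg'
  set rx := ℛ k x
  set ry := ℛ k y
  set r := fun j => ℛ k (ry.right j)
  calc sOf g d (Gmap k X p (x ⊗ₜ y))
      = ∑ i ∈ rx.index, ∑ j ∈ ry.index, ∑ l ∈ (r j).index,
          bOf k X g d (p (rx.right i ⊗ₜ ry.left j) ⊗ₜ (r j).right l) ⊗ₜ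
            (counit (R := k) ((r j).left l) • rx.left i) := by
        simp only [sOf, LinearMap.comp_apply, map_comulTcc_Gmap_tmul _ _ hp rx ry r, hg', cE_tmul]
    _ = ∑ i ∈ rx.index, ∑ j ∈ ry.index,
          bOf k X g d (p (rx.right i ⊗ₜ ry.left j) ⊗ₜ ry.right j) ⊗ₜ rx.left i := by
        simp only [← sum_counit_smul (r _), tmul_sum, map_sum, sum_tmul, tmul_smul, map_smul,
          ← smul_tmul']
    _ = GmapCop k X d (TensorProduct.comm k X X (x ⊗ₜ y)) := by
        simp only [TensorProduct.comm_tmul, GmapCop_tmul d y rx, ← hb, Gmap_tmul p _ ry, map_sum,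
          sum_tmul]

theorem sum_equivFin_symm {M : Type*} [AddCommMonoid M] (I : Finset ι) (f : ι → M) :
    ∑ t, f (I.equivFin.symm t) = ∑ i ∈ I, f i := by
  rw [Equiv.sum_comp I.equivFin.symm (fun i : I => f i), Finset.sum_coe_sort]

theorem ExchangeId.sum_eq {p d : X ⊗[k] X →ₗ[k] X} (hex : ExchangeId k X p d) {x y : X}
    (rx : Repr k x ι) (ry : Repr k y κ) :
    ∑ i ∈ rx.index, ∑ j ∈ ry.index,
        d (ry.left j ⊗ₜ rx.right i) ⊗ₜ[k] p (rx.left i ⊗ₜ ry.right j) =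
      ∑ i ∈ rx.index, ∑ j ∈ ry.index,
        d (ry.right j ⊗ₜ rx.left i) ⊗ₜ[k] p (rx.right i ⊗ₜ ry.left j) := by
  have h := hex x y _ _ (fun t => rx.left (rx.index.equivFin.symm t))
    (fun t => rx.right (rx.index.equivFin.symm t)) (fun t => ry.left (ry.index.equivFin.symm t))
    (fun t => ry.right (ry.index.equivFin.symm t))
    (by rw [sum_equivFin_symm rx.index fun i => rx.left i ⊗ₜ[k] rx.right i, rx.eq])
    (by rw [sum_equivFin_symm ry.index fun j => ry.left j ⊗ₜ[k] ry.right j, ry.eq])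
  simpa only [← sum_equivFin_symm rx.index, ← sum_equivFin_symm ry.index] using h

/-- `y₍₂₎ ⊥ x₍₁₎ ⊗ S (x₍₂₎·y₍₁₎ ⊗ y₍₃₎) = y₍₁₎ ⊥ x₍₂₎ ⊗ S (x₍₁₎·y₍₂₎ ⊗ y₍₃₎)`: the exchange
identity with a third leg of `y` carried along. -/
theorem ExchangeId.sum_tmul_map_eq {W : Type*} [AddCommGroup W] [Module k W]
    {p d : X ⊗[k] X →ₗ[k] X} (hex : ExchangeId k X p d) (S : X ⊗[k] X →ₗ[k] W) {a y : X}
    (ra : Repr k a ι) (ry : Repr k y κ) (r : ∀ j, Repr k (ry.right j) μ) :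
    ∑ n ∈ ra.index, ∑ j ∈ ry.index, ∑ l ∈ (r j).index,
        d ((r j).left l ⊗ₜ ra.left n) ⊗ₜ[k] S (p (ra.right n ⊗ₜ ry.left j) ⊗ₜ (r j).right l) =
      ∑ n ∈ ra.index, ∑ j ∈ ry.index, ∑ l ∈ (r j).index,
        d (ry.left j ⊗ₜ ra.right n) ⊗ₜ[k] S (p (ra.left n ⊗ₜ (r j).left l) ⊗ₜ (r j).right l) := by
  set rl := fun j => ℛ k (ry.left j)
  have back := fun n => sum_apply_coassoc (TensorProduct.map (d ∘ₗ (TensorProduct.mk k X X).flip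
      (ra.left n)) (S ∘ₗ LinearMap.rTensor X (p ∘ₗ TensorProduct.mk k X X (ra.right n))) ∘ₗ
      (TensorProduct.leftComm k X X X).toLinearMap) ry rl r
  have fwd := fun n => sum_apply_coassoc (TensorProduct.map (d ∘ₗ (TensorProduct.mk k X X).flip
      (ra.right n)) (S ∘ₗ LinearMap.rTensor X (p ∘ₗ TensorProduct.mk k X X (ra.left n)))) ry rl r
  have ex := fun j => congr(TensorProduct.map LinearMap.id
      (S ∘ₗ (TensorProduct.mk k X X).flip (ry.right j)) $(hex.sum_eq ra (rl j)))
  simp only [LinearMap.comp_apply, LinearEquiv.coe_coe, TensorProduct.leftComm_tmul,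
    TensorProduct.map_tmul, LinearMap.flip_apply, TensorProduct.mk_apply, LinearMap.rTensor_tmul,
    LinearMap.id_apply, map_sum] at back fwd ex
  calc _ = ∑ n ∈ ra.index, ∑ j ∈ ry.index, ∑ l ∈ (rl j).index, d ((rl j).right l ⊗ₜ ra.left n) ⊗ₜ[k]
          S (p (ra.right n ⊗ₜ (rl j).left l) ⊗ₜ ry.right j) :=
        Finset.sum_congr rfl fun n _ => (back n).symm
    _ = ∑ n ∈ ra.index, ∑ j ∈ ry.index, ∑ l ∈ (rl j).index, d ((rl j).left l ⊗ₜ ra.right n) ⊗ₜ[k]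
          S (p (ra.left n ⊗ₜ (rl j).right l) ⊗ₜ ry.right j) := by
        rw [Finset.sum_comm]
        conv_rhs => rw [Finset.sum_comm]
        exact Finset.sum_congr rfl fun j _ => (ex j).symm
    _ = _ := Finset.sum_congr rfl fun n _ => fwd n

theorem comm_comp_comulTcc :
    (TensorProduct.comm k _ _).toLinearMap ∘ₗ comulTcc k X = comulT k X := by
  refine TensorProduct.ext' fun x y => ?_
  simp [comulTcc_tmul (ℛ k x) (ℛ k y), comulT_tmul (ℛ k x) (ℛ k y), map_sum]

/-- `(s ⊗ s) (Δ (x·y₍₁₎ ⊗ y₍₂₎)) = (y₍₂₎ ⊥ x₍₂₎ ⊗ x₍₁₎) ⊗ s (x₍₃₎·y₍₁₎ ⊗ y₍₃₎)` -/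
theorem map_sOf_comulT_Gmap_tmul {p g : X ⊗[k] X →ₗ[k] X} (d : X ⊗[k] X →ₗ[k] X)
    (hp : IsCoalgMorCop k X p) (hg : g ∘ₗ Gmap k X p = cE k X) {x y : X} (rx : Repr k x ι)
    (ry : Repr k y κ) (a : ∀ i, Repr k (rx.right i) μ) (r : ∀ j, Repr k (ry.right j) ν) :
    TensorProduct.map (sOf g d) (sOf g d) (comulT k X (Gmap k X p (x ⊗ₜ y))) =
      ∑ i ∈ rx.index, ∑ n ∈ (a i).index, ∑ j ∈ ry.index, ∑ l ∈ (r j).index,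
        (d ((r j).left l ⊗ₜ (a i).left n) ⊗ₜ rx.left i) ⊗ₜ[k]
          sOf g d (p ((a i).right n ⊗ₜ ry.left j) ⊗ₜ (r j).right l) := by
  have hs (a b : X) : sOf g d (Gmap k X p (a ⊗ₜ b)) = GmapCop k X d (b ⊗ₜ a) :=
    LinearMap.congr_fun (sOf_comp_Gmap d hp hg) (a ⊗ₜ b)
  have h := sum_apply_coassoc (∑ j ∈ ry.index, ∑ l ∈ (r j).index,
      TensorProduct.map (TensorProduct.map (d ∘ₗ TensorProduct.mk k X X ((r j).left l))
        LinearMap.id ∘ₗ (TensorProduct.comm k X X).toLinearMap)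
        (sOf g d ∘ₗ (TensorProduct.mk k X X).flip ((r j).right l) ∘ₗ p ∘ₗ
          (TensorProduct.mk k X X).flip (ry.left j)) ∘ₗ
        (TensorProduct.assoc k X X X).symm.toLinearMap)
    rx (fun i => ℛ k (rx.left i)) a
  simp only [LinearMap.sum_apply, LinearMap.comp_apply, LinearEquiv.coe_coe,
    TensorProduct.assoc_symm_tmul, TensorProduct.map_tmul, TensorProduct.comm_tmul,
    TensorProduct.mk_apply, LinearMap.flip_apply, LinearMap.id_apply] at h
  rw [← comm_comp_comulTcc, LinearMap.comp_apply, LinearEquiv.coe_coe, TensorProduct.map_comm,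
    map_comulTcc_Gmap_tmul _ _ hp rx ry r, ← h]
  simp only [map_sum, TensorProduct.comm_tmul, hs, GmapCop_tmul d _ (ℛ k (rx.left _)), sum_tmul]
  refine Finset.sum_congr rfl fun i _ => ?_
  rw [Finset.sum_congr rfl fun j _ => Finset.sum_comm, Finset.sum_comm]

/-- `Δ (y ⊥ x₍₂₎ ⊗ x₍₁₎) = (y₍₁₎ ⊥ x₍₄₎ ⊗ x₍₁₎) ⊗ (y₍₂₎ ⊥ x₍₃₎ ⊗ x₍₂₎)` -/
theorem comulT_GmapCop_tmul {d : X ⊗[k] X →ₗ[k] X} (hd : IsCoalgMorCop k X d) {x y : X}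
    (rx : Repr k x ι) (ry : Repr k y κ) (a : ∀ i, Repr k (rx.right i) μ)
    (b : ∀ i n, Repr k ((a i).left n) ν) :
    comulT k X (GmapCop k X d (y ⊗ₜ x)) =
      ∑ i ∈ rx.index, ∑ n ∈ (a i).index, ∑ q ∈ (b i n).index, ∑ j ∈ ry.index,
        (d (ry.left j ⊗ₜ (a i).right n) ⊗ₜ rx.left i) ⊗ₜ[k]
          (d (ry.right j ⊗ₜ (b i n).right q) ⊗ₜ (b i n).left q) := by
  have h := sum_apply_coassoc₄ (∑ j ∈ ry.index,
      TensorProduct.map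
        (TensorProduct.map (d ∘ₗ TensorProduct.mk k X X (ry.left j)) LinearMap.id ∘ₗ
          (TensorProduct.comm k X X).toLinearMap)
        (TensorProduct.map (d ∘ₗ TensorProduct.mk k X X (ry.right j)) LinearMap.id ∘ₗ
          (TensorProduct.comm k X X).toLinearMap) ∘ₗ
      (TensorProduct.tensorTensorTensorComm k X X X X).toLinearMap ∘ₗ
      LinearMap.lTensor _ (TensorProduct.comm k X X).toLinearMap ∘ₗ
      (TensorProduct.assoc k X X _).symm.toLinearMap)
    rx (fun i => ℛ k (rx.left i)) a b
  simp only [LinearMap.sum_apply, LinearMap.comp_apply, LinearEquiv.coe_coe,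
    TensorProduct.assoc_symm_tmul, LinearMap.lTensor_tmul, TensorProduct.comm_tmul,
    TensorProduct.tensorTensorTensorComm_tmul, TensorProduct.map_tmul, TensorProduct.mk_apply,
    LinearMap.id_apply] at h
  rw [← h, GmapCop_tmul d y rx, map_sum]
  simp only [comulT_tmul (hd.repr ry (a _)) (ℛ k (rx.left _)), IsCoalgMorCop.repr]
  refine Finset.sum_congr rfl fun i _ => ?_
  rw [Finset.sum_comm]
  exact Finset.sum_congr rfl fun _ _ => Finset.sum_product_right ..

theorem comulT_comp_GmapCop_comm {p g d : X ⊗[k] X →ₗ[k] X} (hp : IsCoalgMorCop k X p)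
    (hd : IsCoalgMorCop k X d) (hex : ExchangeId k X p d) (hg : g ∘ₗ Gmap k X p = cE k X) :
    comulT k X ∘ₗ GmapCop k X d ∘ₗ (TensorProduct.comm k X X).toLinearMap =
      TensorProduct.map (sOf g d) (sOf g d) ∘ₗ comulT k X ∘ₗ Gmap k X p := by
  refine TensorProduct.ext' fun x y => ?_
  have hs (a b : X) : sOf g d (Gmap k X p (a ⊗ₜ b)) = GmapCop k X d (b ⊗ₜ a) :=
    LinearMap.congr_fun (sOf_comp_Gmap d hp hg) (a ⊗ₜ b)
  set rx := ℛ k x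
  set ry := ℛ k y
  set a := fun i => ℛ k (rx.right i)
  set r := fun j => ℛ k (ry.right j)
  simp only [LinearMap.comp_apply, LinearEquiv.coe_coe, TensorProduct.comm_tmul]
  rw [comulT_GmapCop_tmul hd rx ry a fun i n => ℛ k ((a i).left n),
    map_sOf_comulT_Gmap_tmul d hp hg rx ry a r]
  refine Finset.sum_congr rfl fun i _ => ?_
  have ex := congr(TensorProduct.map ((TensorProduct.mk k X X).flip (rx.left i))
    LinearMap.id $(hex.sum_tmul_map_eq (sOf g d) (a i) ry r))
  simp only [map_sum, TensorProduct.map_tmul, LinearMap.flip_apply, TensorProduct.mk_apply,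
    LinearMap.id_apply] at ex
  rw [ex]
  refine Finset.sum_congr rfl fun n _ => ?_
  rw [Finset.sum_comm]
  refine Finset.sum_congr rfl fun j _ => ?_
  conv_rhs => rw [← tmul_sum, ← map_sum, ← Gmap_tmul p _ (r j), hs,
    GmapCop_tmul d _ (ℛ k ((a i).left n)), tmul_sum]

theorem comulT_comp_sOf {p g d : X ⊗[k] X →ₗ[k] X} (hp : IsCoalgMorCop k X p)
    (hd : IsCoalgMorCop k X d) (hex : ExchangeId k X p d) (hg₁ : p ∘ₗ Gmap k X g = cE k X)
    (hg₂ : g ∘ₗ Gmap k X p = cE k X) :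
    comulT k X ∘ₗ sOf g d = TensorProduct.map (sOf g d) (sOf g d) ∘ₗ comulT k X := by
  have hs : sOf g d = (GmapCop k X d ∘ₗ (TensorProduct.comm k X X).toLinearMap) ∘ₗ Gmap k X g := by
    rw [← sOf_comp_Gmap d hp hg₂, LinearMap.comp_assoc, Gmap_comp_Gmap_eq_id hg₁,
      LinearMap.comp_id]
  calc comulT k X ∘ₗ sOf g d
      = (comulT k X ∘ₗ GmapCop k X d ∘ₗ (TensorProduct.comm k X X).toLinearMap) ∘ₗ
          Gmap k X g := by
        conv_lhs => rw [hs]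
        simp only [LinearMap.comp_assoc]
    _ = TensorProduct.map (sOf g d) (sOf g d) ∘ₗ comulT k X := by
        rw [comulT_comp_GmapCop_comm hp hd hex hg₂, LinearMap.comp_assoc, LinearMap.comp_assoc,
          Gmap_comp_Gmap_eq_id hg₁, LinearMap.comp_id]

end Solution

/-- the map `s (x⊗y) := ˣ⁽²⁾y₍₂₎ ⊗ x₍₁₎^(y₍₁₎)` associated with a left
regular q-magma coalgebra is a left non-degenerate coalgebra endomorphism of `X ⊗ X`. -/
theorem stmt_4 (p d g : X ⊗[k] X →ₗ[k] X)
    (hp : IsCoalgMorCop k X p) (hd : IsCoalgMorCop k X d) (hex : ExchangeId k X p d)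
    (hg1 : p ∘ₗ Gmap k X g = cE k X) (hg2 : g ∘ₗ Gmap k X p = cE k X) :
    IsCoalgEndo k X (TensorProduct.map (bOf k X g d) g ∘ₗ comulTcc k X) ∧
      LeftNonDeg k X (TensorProduct.map (bOf k X g d) g ∘ₗ comulTcc k X) := by
  change IsCoalgEndo k X (sOf g d) ∧ LeftNonDeg k X (sOf g d)
  have hg := counit_comp_eq_counitT_of_comp_Gmap_eq_cE hp.2 hg1
  have hb := counit_comp_bOf hg hd.2
  refine ⟨⟨comulT_comp_sOf hp hd hex hg1 hg2, counitT_comp_sOf hg hb⟩, ?_⟩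
  rw [LeftNonDeg, comp2_sOf hb]
  exact Gmap_bijective hg2 hg1

end
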